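/- For compact E ⊂ ℝ set H_W(E) = E[sup_{t∈E} e^{W(t)}] (which is finite because ξ_W has càdlàg sample paths). For every δ ≥ 0 the limit defining the generalized Pickands constant exists and satisfies H_W^δ = lim_{T→∞} H_W(δℤ ∩ [0,T])/T = inf_{T>0} H_W(δℤ ∩ [0,T])/T ∈ [0,∞); moreover, if δ > 0 then H_W^δ ≤ 1/δ. -/

import Mathlib

open MeasureTheory Filter Set ProbabilityTheory
open scoped ENNReal NNReal Topology

noncomputable section

/-- The grid `δℤ ⊆ ℝ`, with the convention `δℤ = ℝ` when `δ = 0`. -/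
def grid (δ : ℝ) : Set ℝ := if δ = 0 then Set.univ else {t : ℝ | ∃ n : ℤ, t = δ * n}

/-- A function `f : ℝ → ℝ` is càdlàg: right-continuous with left limits. -/
def Cadlag (f : ℝ → ℝ) : Prop :=
  ∀ t : ℝ, ContinuousWithinAt f (Set.Ici t) t ∧ ∃ l : ℝ, Tendsto f (𝓝[<] t) (𝓝 l)

/-- `e^{W(t)}` as an extended nonnegative real. -/
def expW {Ω : Type*} (W : Ω → ℝ → ℝ) (ω : Ω) (t : ℝ) : ℝ≥0∞ :=
  ENNReal.ofReal (Real.exp (W ω t))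

/-- `M^δ = sup_{t ∈ δℤ} e^{W(t)}`. -/
def Msup {Ω : Type*} (W : Ω → ℝ → ℝ) (δ : ℝ) (ω : Ω) : ℝ≥0∞ :=
  ⨆ t ∈ grid δ, expW W ω t

/-- `S^η = η ∑_{t ∈ ηℤ} e^{W(t)}` for `η > 0`, and `S^0 = ∫_ℝ e^{W(t)} dt`. -/
def Ssum {Ω : Type*} (W : Ω → ℝ → ℝ) (η : ℝ) (ω : Ω) : ℝ≥0∞ :=
  if η = 0 then ∫⁻ t : ℝ, expW W ω t
  else ENNReal.ofReal η * ∑' n : ℤ, expW W ω (η * n)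

/-- `E[sup_{t ∈ δℤ ∩ [0,T]} e^{W(t)}]`, the quantity whose linear growth rate in `T`
is the generalized Pickands constant `H_W^δ`. -/
def picksum {Ω : Type*} [MeasurableSpace Ω] (P : Measure Ω) (W : Ω → ℝ → ℝ)
    (δ T : ℝ) : ℝ≥0∞ :=
  ∫⁻ ω, ⨆ t ∈ grid δ ∩ Set.Icc 0 T, expW W ω t ∂P

/-- Stationarity of the Brown–Resnick process `ξ_W` built from `W`, expressed through the
equivalent characterization that the Poisson point processes `{Uᵢ + Wᵢ}` and `{Uᵢ + θ_h Wᵢ}`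
on path space have the same intensity measure: for every `h ∈ ℝ` and Borel `A ⊆ D`,
`∫ e^{-u} P(u + W ∈ A) du = ∫ e^{-u} P(u + θ_h W ∈ A) du`, where `θ_h W (s) = W(s - h)`. -/
def BRStationary {Ω : Type*} [MeasurableSpace Ω] (P : Measure Ω) (W : Ω → ℝ → ℝ) : Prop :=
  ∀ (h : ℝ) (A : Set (ℝ → ℝ)), MeasurableSet A →
    (∫⁻ u : ℝ, ENNReal.ofReal (Real.exp (-u)) * P {ω | (fun s => u + W ω s) ∈ A}) =
    (∫⁻ u : ℝ, ENNReal.ofReal (Real.exp (-u)) * P {ω | (fun s => u + W ω (s - h)) ∈ A})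

/-!
Reading stationarity of `ξ_W` through the identity `∫ e^{-u} P(e^{-u} < Y) du = E[Y]` gives
`E[sup_{t ∈ D} e^{W(t - h)}] = E[sup_{t ∈ D} e^{W(t)}]` for every countable `D`. Right-continuity
of the paths lets `δℤ ∩ [a, b]` be replaced by a countable set, so `H_W(δℤ ∩ [a, b])` is invariant
under shifts by `δℤ`. Since each of the `⌊T/S⌋ + 1` blocks `[iS, (i+1)S]` covering `[0, T]` fits in
such a shift of `[0, S]`, `H_W(δℤ ∩ [0, T]) ≤ (⌊T/S⌋ + 1) H_W(δℤ ∩ [0, S])`, and a Fekete-type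
argument identifies the limit of `H_W(δℤ ∩ [0, T]) / T` with its infimum. For `T < δ` the set
`δℤ ∩ [0, T]` is `{0}`, so `H_W^δ ≤ E[e^{W(0)}] / T = 1 / T`.
-/

lemma mem_grid_iff_of_ne_zero {δ : ℝ} (hδ : δ ≠ 0) {t : ℝ} : t ∈ grid δ ↔ ∃ n : ℤ, t = δ * n := by
  simp [grid, hδ]

lemma grid_countable {δ : ℝ} (hδ : δ ≠ 0) : (grid δ).Countable := by
  refine (countable_range fun n : ℤ => δ * n).mono fun t ht => ?_
  obtain ⟨n, rfl⟩ := (mem_grid_iff_of_ne_zero hδ).1 ht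
  exact ⟨n, rfl⟩

lemma add_mem_grid {δ s t : ℝ} (hs : s ∈ grid δ) (ht : t ∈ grid δ) : s + t ∈ grid δ := by
  rcases eq_or_ne δ 0 with rfl | hδ
  · simp [grid]
  obtain ⟨m, rfl⟩ := (mem_grid_iff_of_ne_zero hδ).1 hs
  obtain ⟨n, rfl⟩ := (mem_grid_iff_of_ne_zero hδ).1 ht
  exact (mem_grid_iff_of_ne_zero hδ).2 ⟨m + n, by push_cast; ring⟩

lemma sub_mem_grid {δ s t : ℝ} (hs : s ∈ grid δ) (ht : t ∈ grid δ) : s - t ∈ grid δ := by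
  rcases eq_or_ne δ 0 with rfl | hδ
  · simp [grid]
  obtain ⟨m, rfl⟩ := (mem_grid_iff_of_ne_zero hδ).1 hs
  obtain ⟨n, rfl⟩ := (mem_grid_iff_of_ne_zero hδ).1 ht
  exact (mem_grid_iff_of_ne_zero hδ).2 ⟨m - n, by push_cast; ring⟩

lemma image_sub_grid_inter_Icc {δ h : ℝ} (hh : h ∈ grid δ) (a b : ℝ) :
    (· - h) '' (grid δ ∩ Icc a b) = grid δ ∩ Icc (a - h) (b - h) := by
  ext s
  constructor
  · rintro ⟨t, ⟨ht, ht₁, ht₂⟩, rfl⟩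
    exact ⟨sub_mem_grid ht hh, by linarith, by linarith⟩
  · rintro ⟨hs, hs₁, hs₂⟩
    exact ⟨s + h, ⟨add_mem_grid hs hh, by linarith, by linarith⟩, by ring⟩

lemma exists_isLeast_grid_inter_Ici {δ : ℝ} (hδ : 0 ≤ δ) (x : ℝ) :
    ∃ h, IsLeast (grid δ ∩ Ici x) h := by
  rcases hδ.eq_or_lt with rfl | hδ
  · exact ⟨x, ⟨by simp [grid], mem_Ici.2 le_rfl⟩, fun t ht => ht.2⟩
  refine ⟨δ * ⌈x / δ⌉, ⟨(mem_grid_iff_of_ne_zero hδ.ne').2 ⟨_, rfl⟩, ?_⟩, ?_⟩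
  · exact mem_Ici.2 ((div_le_iff₀' hδ).1 (Int.le_ceil _))
  · rintro t ⟨ht, hxt⟩
    obtain ⟨n, rfl⟩ := (mem_grid_iff_of_ne_zero hδ.ne').1 ht
    have : ⌈x / δ⌉ ≤ n := Int.ceil_le.2 ((div_le_iff₀' hδ).2 hxt)
    gcongr

lemma grid_inter_Icc_eq_singleton {δ T : ℝ} (hT : 0 ≤ T) (hTδ : T < δ) :
    grid δ ∩ Icc 0 T = {0} := by
  have hδ : 0 < δ := hT.trans_lt hTδ
  ext t
  refine ⟨?_, fun ht => ?_⟩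
  · rintro ⟨ht, ht₀, htT⟩
    obtain ⟨n, rfl⟩ := (mem_grid_iff_of_ne_zero hδ.ne').1 ht
    have h₀ : 0 ≤ n := by exact_mod_cast nonneg_of_mul_nonneg_right ht₀ hδ
    have h₁ : n < 1 := by
      have : (n : ℝ) < 1 := by nlinarith
      exact_mod_cast this
    obtain rfl : n = 0 := by omega
    simp
  · rw [mem_singleton_iff.1 ht]
    exact ⟨(mem_grid_iff_of_ne_zero hδ.ne').2 ⟨0, by simp⟩, le_rfl, hT⟩

lemma biSup_eq_biSup_of_mem_closure {α : Type*} [CompleteLattice α] [TopologicalSpace α]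
    [ClosedIicTopology α] {g : ℝ → α} {S D : Set ℝ} (hDS : D ⊆ S)
    (hg : ∀ t ∈ S \ D, ContinuousWithinAt g (Ioi t) t)
    (hD : ∀ t ∈ S \ D, t ∈ closure (D ∩ Ioi t)) :
    ⨆ t ∈ S, g t = ⨆ t ∈ D, g t := by
  refine le_antisymm (iSup₂_le fun t ht => ?_) (biSup_mono hDS)
  by_cases htD : t ∈ D
  · exact le_biSup g htD
  have hgt : g t ∈ closure (g '' (D ∩ Ioi t)) :=
    ((hg t ⟨ht, htD⟩).mono inter_subset_right).mem_closure_image (hD t ⟨ht, htD⟩)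
  refine closure_minimal ?_ isClosed_Iic hgt
  rintro _ ⟨s, hs, rfl⟩
  exact le_biSup g hs.1

lemma exists_countable_biSup_grid_inter_Icc_eq (δ a b : ℝ) :
    ∃ D : Set ℝ, D.Countable ∧ ∀ g : ℝ → ℝ≥0∞, (∀ t, ContinuousWithinAt g (Ici t) t) →
      ⨆ t ∈ grid δ ∩ Icc a b, g t = ⨆ t ∈ D, g t := by
  rcases eq_or_ne δ 0 with rfl | hδ
  · -- no rational of `[a, b]` lies to the right of `b`, so `b` is added by hand
    set Q := range ((↑) : ℚ → ℝ)
    refine ⟨Icc a b ∩ insert b Q, ((countable_range _).insert b).mono inter_subset_right,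
      fun g hg => ?_⟩
    rw [show grid 0 = univ from if_pos rfl, univ_inter]
    refine biSup_eq_biSup_of_mem_closure inter_subset_left
      (fun t _ => (hg t).mono Ioi_subset_Ici_self) fun t ⟨ht, htD⟩ => ?_
    have htb : t < b := ht.2.lt_of_ne fun h => htD ⟨ht, h ▸ mem_insert _ _⟩
    have hsub : Ioo t b ∩ Q ⊆ (Icc a b ∩ insert b Q) ∩ Ioi t :=
      fun s ⟨hs, hq⟩ => ⟨⟨⟨ht.1.trans hs.1.le, hs.2.le⟩, mem_insert_of_mem _ hq⟩, hs.1⟩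
    have hcl : closure (Ioo t b) ⊆ closure (Ioo t b ∩ Q) :=
      closure_minimal (Rat.denseRange_cast.open_subset_closure_inter isOpen_Ioo) isClosed_closure
    apply closure_mono hsub (hcl _)
    rw [closure_Ioo htb.ne]
    exact left_mem_Icc.2 htb.le
  · exact ⟨grid δ ∩ Icc a b, (grid_countable hδ).mono inter_subset_left, fun _ _ => rfl⟩

lemma continuousWithinAt_expW {Ω : Type*} {W : Ω → ℝ → ℝ} {ω : Ω} {s : Set ℝ} {t : ℝ}
    (h : ContinuousWithinAt (W ω) s t) : ContinuousWithinAt (expW W ω) s t :=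
  (ENNReal.continuous_ofReal.comp Real.continuous_exp).continuousAt.comp_continuousWithinAt h

lemma measurable_expW {Ω : Type*} [MeasurableSpace Ω] {W : Ω → ℝ → ℝ} (hW : Measurable W)
    (t : ℝ) : Measurable fun ω => expW W ω t :=
  ENNReal.measurable_ofReal.comp (Real.measurable_exp.comp ((measurable_pi_apply t).comp hW))

lemma measurable_biSup_grid_inter_Icc {Ω : Type*} [MeasurableSpace Ω] {W : Ω → ℝ → ℝ}
    (hW : Measurable W) (hright : ∀ ω t, ContinuousWithinAt (W ω) (Ici t) t) (δ a b : ℝ) :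
    Measurable fun ω => ⨆ t ∈ grid δ ∩ Icc a b, expW W ω t := by
  obtain ⟨D, hD, hsup⟩ := exists_countable_biSup_grid_inter_Icc_eq δ a b
  simp_rw [hsup _ fun t => continuousWithinAt_expW (hright _ t)]
  exact Measurable.biSup D hD fun t _ => measurable_expW hW t

lemma one_lt_biSup_exp_add_iff (u : ℝ) (f : ℝ → ℝ) (D : Set ℝ) :
    1 < ⨆ t ∈ D, ENNReal.ofReal (Real.exp (u + f t)) ↔
      ENNReal.ofReal (Real.exp (-u)) < ⨆ t ∈ D, ENNReal.ofReal (Real.exp (f t)) := by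
  have hmul : ∀ x, ENNReal.ofReal (Real.exp (u + x)) =
      ENNReal.ofReal (Real.exp u) * ENNReal.ofReal (Real.exp x) := fun x => by
    rw [Real.exp_add, ENNReal.ofReal_mul (Real.exp_nonneg u)]
  have hne : ENNReal.ofReal (Real.exp u) ≠ 0 := by simp [Real.exp_pos]
  simp_rw [hmul, ← ENNReal.mul_iSup]
  conv_rhs => rw [← ENNReal.mul_lt_mul_iff_right hne ENNReal.ofReal_ne_top]
  rw [← hmul, add_neg_cancel, Real.exp_zero, ENNReal.ofReal_one]

lemma setLIntegral_exp_neg_lt (y : ℝ≥0∞) :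
    ∫⁻ u in {u : ℝ | ENNReal.ofReal (Real.exp (-u)) < y}, ENNReal.ofReal (Real.exp (-u)) = y := by
  rcases eq_or_ne y ⊤ with rfl | hy
  · simp only [ENNReal.ofReal_lt_top, ofPred_true, Measure.restrict_univ]
    refine top_le_iff.1 ?_
    calc ⊤ = ∫⁻ _ in Iic (0 : ℝ), 1 := by simp
      _ ≤ ∫⁻ u in Iic 0, ENNReal.ofReal (Real.exp (-u)) :=
        setLIntegral_mono (by fun_prop) fun u hu =>
          ENNReal.one_le_ofReal.2 (Real.one_le_exp (neg_nonneg.2 hu))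
      _ ≤ _ := setLIntegral_le_lintegral _ _
  rcases eq_or_ne y 0 with rfl | hy₀
  · simp
  have hpos : 0 < y.toReal := ENNReal.toReal_pos hy₀ hy
  have hset : {u : ℝ | ENNReal.ofReal (Real.exp (-u)) < y} = Ioi (-Real.log y.toReal) := by
    ext u
    conv_lhs => rw [mem_ofPred_eq, ← ENNReal.ofReal_toReal hy]
    rw [ENNReal.ofReal_lt_ofReal_iff hpos, ← Real.lt_log_iff_exp_lt hpos, mem_Ioi, neg_lt]
  rw [hset, ← ofReal_integral_eq_lintegral_ofReal (integrableOn_exp_neg_Ioi _)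
    (ae_of_all _ fun u => (Real.exp_pos _).le), integral_exp_neg_Ioi, neg_neg,
    Real.exp_log hpos, ENNReal.ofReal_toReal hy]

lemma lintegral_exp_neg_mul_measure_lt {Ω : Type*} [MeasurableSpace Ω] (P : Measure Ω)
    [SFinite P] {Y : Ω → ℝ≥0∞} (hY : Measurable Y) :
    ∫⁻ u, ENNReal.ofReal (Real.exp (-u)) * P {ω | ENNReal.ofReal (Real.exp (-u)) < Y ω} =
      ∫⁻ ω, Y ω ∂P := by
  set e : ℝ → ℝ≥0∞ := fun u => ENNReal.ofReal (Real.exp (-u))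
  have he : Measurable e := by fun_prop
  have hF : Measurable fun p : ℝ × Ω => if e p.1 < Y p.2 then e p.1 else 0 :=
    Measurable.ite (measurableSet_lt (he.comp measurable_fst) (hY.comp measurable_snd))
      (he.comp measurable_fst) measurable_const
  calc ∫⁻ u, e u * P {ω | e u < Y ω}
      = ∫⁻ u, ∫⁻ ω, (if e u < Y ω then e u else 0) ∂P := lintegral_congr fun u => by
        rw [← lintegral_indicator_const (measurableSet_lt measurable_const hY)]
        simp only [indicator_apply, mem_ofPred_eq]
    _ = ∫⁻ ω, (∫⁻ u, if e u < Y ω then e u else 0) ∂P := lintegral_lintegral_swap hF.aemeasurable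
    _ = ∫⁻ ω, Y ω ∂P := lintegral_congr fun ω => by
        conv_rhs => rw [← setLIntegral_exp_neg_lt (Y ω)]
        rw [← lintegral_indicator (measurableSet_lt he measurable_const)]
        simp only [indicator_apply, mem_ofPred_eq, e]

lemma BRStationary.lintegral_biSup_sub {Ω : Type*} [MeasurableSpace Ω] {P : Measure Ω}
    [SFinite P] {W : Ω → ℝ → ℝ} (hstat : BRStationary P W) (hW : Measurable W) {D : Set ℝ}
    (hD : D.Countable) (h : ℝ) :
    ∫⁻ ω, ⨆ t ∈ D, expW W ω (t - h) ∂P = ∫⁻ ω, ⨆ t ∈ D, expW W ω t ∂P := by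
  set A : Set (ℝ → ℝ) := {f | 1 < ⨆ t ∈ D, ENNReal.ofReal (Real.exp (f t))}
  have hA : MeasurableSet A :=
    measurableSet_lt measurable_const (Measurable.biSup D hD fun t _ => by fun_prop)
  have key := hstat h A hA
  simp only [A, mem_ofPred_eq, one_lt_biSup_exp_add_iff] at key
  rw [← lintegral_exp_neg_mul_measure_lt P
      (Measurable.biSup D hD fun t _ => measurable_expW hW (t - h)),
    ← lintegral_exp_neg_mul_measure_lt P (Measurable.biSup D hD fun t _ => measurable_expW hW t)]
  exact key.symm

lemma biSup_inter_Icc_le_sum_biSup (G : Set ℝ) (f : ℝ → ℝ≥0∞) {S : ℝ} (hS : 0 < S) (T : ℝ) :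
    ⨆ t ∈ G ∩ Icc 0 T, f t ≤
      ∑ i ∈ Finset.range (⌊T / S⌋₊ + 1), ⨆ t ∈ G ∩ Icc (i * S) (i * S + S), f t := by
  refine iSup₂_le fun t ⟨ht, ht₀, htT⟩ => ?_
  have hi : ⌊t / S⌋₊ ∈ Finset.range (⌊T / S⌋₊ + 1) :=
    Finset.mem_range.2 (Nat.lt_succ_of_le (Nat.floor_le_floor (by gcongr)))
  refine le_trans ?_ (Finset.single_le_sum
    (f := fun i : ℕ => ⨆ t ∈ G ∩ Icc (i * S) (i * S + S), f t) (fun _ _ => zero_le) hi)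
  refine le_biSup f ⟨ht, (le_div_iff₀ hS).1 (Nat.floor_le (div_nonneg ht₀ hS.le)), ?_⟩
  have := (div_lt_iff₀ hS).1 (Nat.lt_floor_add_one (t / S))
  linarith

section Stationary

variable {Ω : Type*} [MeasurableSpace Ω] {P : Measure Ω} [SFinite P] {W : Ω → ℝ → ℝ}

lemma lintegral_biSup_grid_inter_Icc_sub (hstat : BRStationary P W) (hW : Measurable W)
    (hright : ∀ ω t, ContinuousWithinAt (W ω) (Ici t) t) {δ h : ℝ} (hh : h ∈ grid δ)
    (a b : ℝ) :
    ∫⁻ ω, ⨆ t ∈ grid δ ∩ Icc (a - h) (b - h), expW W ω t ∂P =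
      ∫⁻ ω, ⨆ t ∈ grid δ ∩ Icc a b, expW W ω t ∂P := by
  obtain ⟨D, hD, hsup⟩ := exists_countable_biSup_grid_inter_Icc_eq δ a b
  have hshift : ∀ ω t, ContinuousWithinAt (fun s => expW W ω (s - h)) (Ici t) t := fun ω t =>
    (continuousWithinAt_expW (hright ω (t - h))).comp (f := (· - h))
      (continuous_sub_right h).continuousWithinAt fun s hs => sub_le_sub_right hs h
  calc ∫⁻ ω, ⨆ t ∈ grid δ ∩ Icc (a - h) (b - h), expW W ω t ∂P
      = ∫⁻ ω, ⨆ t ∈ grid δ ∩ Icc a b, expW W ω (t - h) ∂P := by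
        simp_rw [← image_sub_grid_inter_Icc hh, iSup_image]
    _ = ∫⁻ ω, ⨆ t ∈ D, expW W ω (t - h) ∂P := by simp_rw [hsup _ (hshift _)]
    _ = ∫⁻ ω, ⨆ t ∈ D, expW W ω t ∂P := hstat.lintegral_biSup_sub hW hD h
    _ = ∫⁻ ω, ⨆ t ∈ grid δ ∩ Icc a b, expW W ω t ∂P := by
        simp_rw [hsup _ fun t => continuousWithinAt_expW (hright _ t)]

lemma lintegral_biSup_grid_inter_Icc_le_picksum (hstat : BRStationary P W) (hW : Measurable W)
    (hright : ∀ ω t, ContinuousWithinAt (W ω) (Ici t) t) {δ : ℝ} (hδ : 0 ≤ δ) (x S : ℝ) :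
    ∫⁻ ω, ⨆ t ∈ grid δ ∩ Icc x (x + S), expW W ω t ∂P ≤ picksum P W δ S := by
  obtain ⟨h, ⟨hh, hxh⟩, hleast⟩ := exists_isLeast_grid_inter_Ici hδ x
  rw [← lintegral_biSup_grid_inter_Icc_sub hstat hW hright hh]
  refine lintegral_mono fun ω => biSup_mono fun t ⟨ht, htx, htS⟩ => ⟨ht, ?_, ?_⟩
  · have : h ≤ t + h := hleast ⟨add_mem_grid ht hh, mem_Ici.2 (by linarith)⟩
    linarith
  · linarith [mem_Ici.1 hxh]

lemma picksum_le_floor_mul (hstat : BRStationary P W) (hW : Measurable W)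
    (hright : ∀ ω t, ContinuousWithinAt (W ω) (Ici t) t) {δ : ℝ} (hδ : 0 ≤ δ) {S : ℝ}
    (hS : 0 < S) (T : ℝ) :
    picksum P W δ T ≤ (⌊T / S⌋₊ + 1) * picksum P W δ S :=
  calc picksum P W δ T
      ≤ ∫⁻ ω, ∑ i ∈ Finset.range (⌊T / S⌋₊ + 1),
          ⨆ t ∈ grid δ ∩ Icc (i * S) (i * S + S), expW W ω t ∂P :=
        lintegral_mono fun ω => biSup_inter_Icc_le_sum_biSup _ _ hS T
    _ = ∑ i ∈ Finset.range (⌊T / S⌋₊ + 1),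
          ∫⁻ ω, ⨆ t ∈ grid δ ∩ Icc (i * S) (i * S + S), expW W ω t ∂P :=
        lintegral_finsetSum _ fun i _ => measurable_biSup_grid_inter_Icc hW hright δ _ _
    _ ≤ ∑ _i ∈ Finset.range (⌊T / S⌋₊ + 1), picksum P W δ S :=
        Finset.sum_le_sum fun i _ =>
          lintegral_biSup_grid_inter_Icc_le_picksum hstat hW hright hδ _ S
    _ = (⌊T / S⌋₊ + 1) * picksum P W δ S := by
        rw [Finset.sum_const, Finset.card_range, nsmul_eq_mul]
        push_cast
        rfl

end Stationary

lemma div_ofReal_le_of_le_floor_mul {f : ℝ → ℝ≥0∞} {S T : ℝ} (hS : 0 < S) (hT : 0 < T)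
    (hfS : f S ≠ ⊤) (hf : f T ≤ (⌊T / S⌋₊ + 1) * f S) :
    f T / ENNReal.ofReal T ≤ ENNReal.ofReal ((f S).toReal / S + (f S).toReal / T) := by
  set q := (f S).toReal
  have hq : f S = ENNReal.ofReal q := (ENNReal.ofReal_toReal hfS).symm
  have hbound : f T ≤ ENNReal.ofReal ((T / S + 1) * q) := by
    refine hf.trans ?_
    rw [hq, ENNReal.ofReal_mul (by positivity), ← ENNReal.ofReal_natCast, ← ENNReal.ofReal_one,
      ← ENNReal.ofReal_add (by positivity) zero_le_one]
    gcongr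
    exact Nat.floor_le (by positivity)
  calc f T / ENNReal.ofReal T ≤ ENNReal.ofReal ((T / S + 1) * q) / ENNReal.ofReal T := by gcongr
    _ = ENNReal.ofReal (q / S + q / T) := by
        rw [← ENNReal.ofReal_div_of_pos hT]
        congr 1
        field_simp

theorem tendsto_div_ofReal_iInf_of_le_floor_mul {f : ℝ → ℝ≥0∞}
    (hfin : ∀ S, 0 < S → f S ≠ ⊤)
    (hf : ∀ S, 0 < S → ∀ T, 0 < T → f T ≤ (⌊T / S⌋₊ + 1) * f S) :
    Tendsto (fun T => f T / ENNReal.ofReal T) atTop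
      (𝓝 (⨅ S ∈ Ioi (0 : ℝ), f S / ENNReal.ofReal S)) := by
  refine tendsto_order.2 ⟨fun c hc => ?_, fun c hc => ?_⟩
  · filter_upwards [eventually_gt_atTop 0] with T hT using hc.trans_le (biInf_le _ hT)
  obtain ⟨S, hS, hSc⟩ : ∃ S ∈ Ioi (0 : ℝ), f S / ENNReal.ofReal S < c := by
    simpa only [iInf_lt_iff, exists_prop] using hc
  set q := (f S).toReal
  have hlim : Tendsto (fun T => ENNReal.ofReal (q / S + q / T)) atTop
      (𝓝 (f S / ENNReal.ofReal S)) := by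
    have : Tendsto (fun T => q / S + q / T) atTop (𝓝 (q / S + 0)) :=
      tendsto_const_nhds.add (tendsto_const_nhds.div_atTop tendsto_id)
    rw [add_zero] at this
    convert ENNReal.tendsto_ofReal this using 2
    rw [ENNReal.ofReal_div_of_pos hS, ENNReal.ofReal_toReal (hfin S hS)]
  filter_upwards [eventually_gt_atTop 0, hlim.eventually_lt_const hSc] with T hT hTc
  exact (div_ofReal_le_of_le_floor_mul hS hT (hfin S hS) (hf S hS T hT)).trans_lt hTc

lemma picksum_eq_one_of_lt {Ω : Type*} [MeasurableSpace Ω] {P : Measure Ω} {W : Ω → ℝ → ℝ}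
    (hmarg : ∫⁻ ω, expW W ω 0 ∂P = 1) {δ T : ℝ} (hT : 0 ≤ T) (hTδ : T < δ) :
    picksum P W δ T = 1 := by
  rw [picksum, grid_inter_Icc_eq_singleton hT hTδ]
  simpa only [iSup_singleton] using hmarg

lemma iInf_picksum_div_le_inv {Ω : Type*} [MeasurableSpace Ω] {P : Measure Ω}
    {W : Ω → ℝ → ℝ} (hmarg : ∫⁻ ω, expW W ω 0 ∂P = 1) {δ : ℝ} (hδ : 0 < δ) :
    ⨅ T ∈ Ioi (0 : ℝ), picksum P W δ T / ENNReal.ofReal T ≤ (ENNReal.ofReal δ)⁻¹ := by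
  have hinv : Tendsto (fun T => (ENNReal.ofReal T)⁻¹) (𝓝[<] δ) (𝓝 (ENNReal.ofReal δ)⁻¹) :=
    ((continuous_inv.comp ENNReal.continuous_ofReal).tendsto δ).mono_left
      nhdsWithin_le_nhds
  refine ge_of_tendsto hinv ?_
  filter_upwards [Ioo_mem_nhdsLT hδ] with T ⟨hT, hTδ⟩
  calc ⨅ T ∈ Ioi (0 : ℝ), picksum P W δ T / ENNReal.ofReal T
      ≤ picksum P W δ T / ENNReal.ofReal T := biInf_le _ hT
    _ = (ENNReal.ofReal T)⁻¹ := by rw [picksum_eq_one_of_lt hmarg hT.le hTδ, one_div]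

theorem pickands_constant_exists_fekete_general
    {Ω : Type*} [MeasurableSpace Ω] (P : Measure Ω) [IsProbabilityMeasure P]
    (W : Ω → ℝ → ℝ) (hWmeas : Measurable W)
    (hpath : ∀ ω, Cadlag (W ω))
    (hmarg : ∀ t : ℝ, ∫⁻ ω, expW W ω t ∂P = 1)
    (hstat : BRStationary P W)
    (hfin : ∀ E : Set ℝ, IsCompact E → (∫⁻ ω, ⨆ t ∈ E, expW W ω t ∂P) < ⊤)
    (δ : ℝ) (hδ : 0 ≤ δ) :
    Tendsto (fun T : ℝ => picksum P W δ T / ENNReal.ofReal T) atTop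
        (𝓝 (⨅ T ∈ Set.Ioi (0 : ℝ), picksum P W δ T / ENNReal.ofReal T)) ∧
      (⨅ T ∈ Set.Ioi (0 : ℝ), picksum P W δ T / ENNReal.ofReal T) < ⊤ ∧
      (0 < δ →
        (⨅ T ∈ Set.Ioi (0 : ℝ), picksum P W δ T / ENNReal.ofReal T)
          ≤ (ENNReal.ofReal δ)⁻¹) := by
  have hright : ∀ ω t, ContinuousWithinAt (W ω) (Ici t) t := fun ω t => (hpath ω t).1
  have hpick_lt_top : ∀ S, picksum P W δ S < ⊤ := fun S =>
    (lintegral_mono fun ω => biSup_mono fun t ht => ht.2).trans_lt (hfin _ isCompact_Icc)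
  refine ⟨tendsto_div_ofReal_iInf_of_le_floor_mul (fun S _ => (hpick_lt_top S).ne)
      fun S hS T _ => picksum_le_floor_mul hstat hWmeas hright hδ hS T, ?_,
    fun hδpos => iInf_picksum_div_le_inv (hmarg 0) hδpos⟩
  calc ⨅ T ∈ Ioi (0 : ℝ), picksum P W δ T / ENNReal.ofReal T
      ≤ picksum P W δ 1 / ENNReal.ofReal 1 := biInf_le _ (mem_Ioi.2 one_pos)
    _ < ⊤ := by simpa using hpick_lt_top 1

/-- **Existence of generalized Pickands constants (Section 2.1, eq. (10)).**
Let `W` be such that the corresponding max-stable Brown–Resnick process `ξ_W` is stationary and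
has càdlàg paths; for compact `E ⊆ ℝ` set `H_W(E) = E[sup_{t ∈ E} e^{W(t)}]`, which is finite
(by the càdlàg property of `ξ_W`, taken here as a hypothesis).  Then for every `δ ≥ 0`
the limit defining the generalized Pickands constant exists and
`H_W^δ = lim_{T→∞} H_W(δℤ ∩ [0,T])/T = inf_{T>0} H_W(δℤ ∩ [0,T])/T ∈ [0,∞)`;
moreover, if `δ > 0` then `H_W^δ ≤ 1/δ`. -/
theorem pickands_constant_exists_fekete
    {Ω : Type*} [MeasurableSpace Ω] (P : Measure Ω) [IsProbabilityMeasure P]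
    (W : Ω → ℝ → ℝ) (hWmeas : Measurable W)
    (hpath : ∀ ω, Cadlag (W ω))
    (hW0 : ∀ᵐ ω ∂P, W ω 0 = 0)
    (hmarg : ∀ t : ℝ, ∫⁻ ω, expW W ω t ∂P = 1)
    (hstat : BRStationary P W)
    (hfin : ∀ E : Set ℝ, IsCompact E → (∫⁻ ω, ⨆ t ∈ E, expW W ω t ∂P) < ⊤)
    (δ : ℝ) (hδ : 0 ≤ δ) :
    Tendsto (fun T : ℝ => picksum P W δ T / ENNReal.ofReal T) atTop
        (𝓝 (⨅ T ∈ Set.Ioi (0 : ℝ), picksum P W δ T / ENNReal.ofReal T)) ∧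
      (⨅ T ∈ Set.Ioi (0 : ℝ), picksum P W δ T / ENNReal.ofReal T) < ⊤ ∧
      (0 < δ →
        (⨅ T ∈ Set.Ioi (0 : ℝ), picksum P W δ T / ENNReal.ofReal T)
          ≤ (ENNReal.ofReal δ)⁻¹) :=
  pickands_constant_exists_fekete_general P W hWmeas hpath hmarg hstat hfin δ hδ
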